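/- arXiv:1709.09584 — 7 statements merged into one kernel-verified Lean document; each statement's English description precedes it below -/
import Mathlib

section
/- Let X be a complex normed space and let {x_1,...,x_k} (k ≥ 2) be a subset of the unit sphere of X. Then {x_1,...,x_k} is completely M-orthogonal (i.e. ‖∑ α_j x_j‖ = max_j |α_j| for all complex scalars α_j) if and only if ‖x_1 + ∑_{j=2}^k λ_j x_j‖ = 1 for all λ_2,...,λ_k in the unit circle 𝕋. -/
/-!
The closed unit polydisc of `ℂⁿ` is the convex hull of the torus `𝕋ⁿ`, since the disc is the
convex hull of the circle. Dividing by `λ₁`, the hypothesis says that `α ↦ ∑ αⱼ xⱼ` maps the torus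
into the unit sphere, so by convexity it maps the polydisc into the unit ball; by homogeneity it
is a contraction for the sup norm. Conversely, if `|αᵢ|` is maximal, flipping the sign of `αᵢ`
changes the sum by `2 αᵢ xᵢ`, and the triangle inequality together with the contraction bound
gives `2 |αᵢ| ≤ ‖∑ αⱼ xⱼ‖ + |αᵢ|`.
-/

open Metric Finset

lemma closedBall_zero_one_eq_convexHull_pi_sphere {𝕜 ι : Type*} [RCLike 𝕜] [Fintype ι] :
    closedBall (0 : ι → 𝕜) 1 = convexHull ℝ (Set.univ.pi fun _ : ι => sphere (0 : 𝕜) 1) := by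
  rw [convexHull_pi, closedBall_pi _ zero_le_one]
  simp only [Pi.zero_apply, convexHull_sphere_eq_closedBall (0 : 𝕜) zero_le_one]

lemma LinearMap.norm_apply_le_of_mapsTo_closedBall {𝕜 E F : Type*} [RCLike 𝕜]
    [NormedAddCommGroup E] [NormedSpace 𝕜 E] [NormedAddCommGroup F] [NormedSpace 𝕜 F]
    (T : E →ₗ[𝕜] F) (hT : Set.MapsTo T (closedBall 0 1) (closedBall 0 1)) (z : E) :
    ‖T z‖ ≤ ‖z‖ := by
  rcases eq_or_ne z 0 with rfl | hz
  · simp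
  have hz' : 0 < ‖z‖ := norm_pos_iff.2 hz
  have := hT (x := ((‖z‖⁻¹ : ℝ) : 𝕜) • z) (by simp [norm_smul, hz])
  rwa [mem_closedBall_zero_iff, map_smul, norm_smul, RCLike.norm_ofReal, abs_inv, abs_norm,
    inv_mul_le_iff₀ hz', mul_one] at this

lemma pi_norm_eq_sup'_norm {ι E : Type*} [Fintype ι] [Nonempty ι] [SeminormedAddCommGroup E]
    (f : ι → E) : ‖f‖ = univ.sup' univ_nonempty (‖f ·‖) :=
  le_antisymm ((pi_norm_le_iff_of_nonempty _).2 fun i => le_sup' (‖f ·‖) (mem_univ i))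
    (sup'_le _ _ fun i _ => norm_le_pi_norm f i)

lemma norm_sum_smul_le_of_forall_norm_eq_one {ι X : Type*} [Fintype ι] [NormedAddCommGroup X]
    [NormedSpace ℂ X] (x : ι → X)
    (h : ∀ μ : ι → ℂ, (∀ j, ‖μ j‖ = 1) → ‖∑ j, μ j • x j‖ ≤ 1) (α : ι → ℂ) :
    ‖∑ j, α j • x j‖ ≤ ‖α‖ := by
  set T := Fintype.linearCombination ℂ x
  have hball : closedBall (0 : ι → ℂ) 1 ⊆ T.restrictScalars ℝ ⁻¹' closedBall 0 1 := by
    rw [closedBall_zero_one_eq_convexHull_pi_sphere]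
    refine convexHull_min (fun μ hμ => ?_)
      ((convex_closedBall 0 1).linear_preimage (T.restrictScalars ℝ))
    simpa [T, Fintype.linearCombination_apply] using h μ (by simpa using hμ)
  simpa [T, Fintype.linearCombination_apply] using
    T.norm_apply_le_of_mapsTo_closedBall (fun _ hz => hball hz) α

section

variable {𝕜 ι X : Type*} [RCLike 𝕜] [Fintype ι] [NormedAddCommGroup X] [NormedSpace 𝕜 X]
  (x : ι → X)

lemma norm_le_norm_sum_smul [Nonempty ι] (hx : ∀ j, ‖x j‖ = 1)
    (hle : ∀ β : ι → 𝕜, ‖∑ j, β j • x j‖ ≤ ‖β‖) (α : ι → 𝕜) :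
    ‖α‖ ≤ ‖∑ j, α j • x j‖ := by
  classical
  obtain ⟨i, -, hi⟩ := univ.exists_mem_eq_sup' univ_nonempty (‖α ·‖)
  rw [← pi_norm_eq_sup'_norm] at hi
  set β := Function.update α i (-α i)
  have hβ : ‖β‖ = ‖α‖ := by
    simp only [pi_norm_eq_sup'_norm]
    refine sup'_congr _ rfl fun j _ => ?_
    rcases eq_or_ne j i with rfl | hj
    · simp [β]
    · simp [β, hj]
  have hsplit : α = β + Pi.single i (2 * α i) := by
    ext j
    rcases eq_or_ne j i with rfl | hj
    · simp only [β, Pi.add_apply, Function.update_self, Pi.single_eq_same]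
      ring
    · simp [β, hj]
  have hsum : ∑ j, α j • x j = ∑ j, β j • x j + (2 * α i) • x i := by
    have := congrArg (Fintype.linearCombination 𝕜 x) hsplit
    rwa [map_add, Fintype.linearCombination_apply_single, Fintype.linearCombination_apply,
      Fintype.linearCombination_apply] at this
  have : 2 * ‖α‖ ≤ ‖∑ j, α j • x j‖ + ‖α‖ :=
    calc 2 * ‖α‖ = ‖(2 * α i) • x i‖ := by
          rw [norm_smul, hx, norm_mul, RCLike.norm_two, hi, mul_one]
      _ = ‖∑ j, α j • x j - ∑ j, β j • x j‖ := by rw [hsum, add_sub_cancel_left]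
      _ ≤ ‖∑ j, α j • x j‖ + ‖∑ j, β j • x j‖ := norm_sub_le _ _
      _ ≤ ‖∑ j, α j • x j‖ + ‖α‖ := by grw [hle β, hβ]
  linarith

lemma norm_sum_smul_eq_one_of_forall_norm_eq_one_of_apply_eq_one (i₀ : ι)
    (h : ∀ lam : ι → 𝕜, lam i₀ = 1 → (∀ j, ‖lam j‖ = 1) → ‖∑ j, lam j • x j‖ = 1)
    (μ : ι → 𝕜) (hμ : ∀ j, ‖μ j‖ = 1) : ‖∑ j, μ j • x j‖ = 1 := by
  have hμ₀ : μ i₀ ≠ 0 := norm_ne_zero_iff.1 (by simp [hμ])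
  have := h ((μ i₀)⁻¹ • μ) (by simp [hμ₀]) (fun j => by simp [hμ])
  simpa only [Pi.smul_apply, smul_eq_mul, mul_smul, ← Finset.smul_sum, norm_smul, norm_inv, hμ,
    inv_one, one_mul] using this

end

theorem stmt0 {X : Type*} [NormedAddCommGroup X] [NormedSpace ℂ X]
    (k : ℕ) (x : Fin (k + 2) → X) (hx : ∀ j, ‖x j‖ = 1) :
    (∀ α : Fin (k + 2) → ℂ,
        ‖∑ j, α j • x j‖ =
          Finset.univ.sup' Finset.univ_nonempty (fun j => ‖α j‖ * ‖x j‖)) ↔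
      (∀ lam : Fin (k + 2) → ℂ, lam 0 = 1 → (∀ j, ‖lam j‖ = 1) →
        ‖∑ j, lam j • x j‖ = 1) := by
  simp only [hx, mul_one, ← pi_norm_eq_sup'_norm]
  constructor
  · intro h lam _ hlam
    rw [h, pi_norm_eq_sup'_norm]
    simp [hlam]
  · intro h α
    have hle := norm_sum_smul_le_of_forall_norm_eq_one x fun μ hμ =>
      (norm_sum_smul_eq_one_of_forall_norm_eq_one_of_apply_eq_one x 0 h μ hμ).le
    exact le_antisymm (hle α) (norm_le_norm_sum_smul x hx hle α)
end

section
/- Let X be a complex normed space and let {x_1,...,x_k} (k ≥ 2) be a subset of the unit sphere of X. Then {x_1,...,x_k} is completely M-orthogonal if and only if ‖∑_{j=1}^k λ_j x_j‖ = 1 for every choice of λ_1,...,λ_k in the unit circle 𝕋. -/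
/-!
Suppose `‖∑ λⱼ xⱼ‖ ≤ 1` for all unimodular `λ`. Given a functional `f` with `‖f‖ ≤ 1`, choosing
each `λⱼ` to rotate `f xⱼ` onto the positive real axis gives `∑ ‖f xⱼ‖ ≤ 1`. Evaluating
`∑ αⱼ xⱼ` on a norming functional then bounds its norm by `max ‖αⱼ‖`; conversely a functional
with `f xᵢ = 1 = ‖xᵢ‖` must vanish on every other `xⱼ`, so it picks out `αᵢ` and
`‖αᵢ‖ ≤ ‖∑ αⱼ xⱼ‖`.
-/

open Finset

section UnimodularSums

variable {𝕜 X ι : Type*} [RCLike 𝕜] [NormedAddCommGroup X] [NormedSpace 𝕜 X] [Fintype ι]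

lemma sum_norm_apply_le_one_of_norm_sum_unimodular_le_one {x : ι → X}
    (H : ∀ lam : ι → 𝕜, (∀ j, ‖lam j‖ = 1) → ‖∑ j, lam j • x j‖ ≤ 1)
    {f : StrongDual 𝕜 X} (hf : ‖f‖ ≤ 1) : ∑ j, ‖f (x j)‖ ≤ 1 := by
  choose lam hlam hrot using fun j => RCLike.exists_norm_eq_mul_self (f (x j))
  have hf_sum : f (∑ j, lam j • x j) = ((∑ j, ‖f (x j)‖ : ℝ) : 𝕜) := by
    simp only [map_sum, map_smul, smul_eq_mul, hrot]
  calc ∑ j, ‖f (x j)‖ = ‖f (∑ j, lam j • x j)‖ := by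
        rw [hf_sum, RCLike.norm_ofReal, abs_of_nonneg (by positivity)]
    _ ≤ ‖f‖ * ‖∑ j, lam j • x j‖ := f.le_opNorm _
    _ ≤ 1 * 1 := mul_le_mul hf (H lam hlam) (norm_nonneg _) zero_le_one
    _ = 1 := one_mul 1

lemma norm_sum_smul_le_of_norm_sum_unimodular_le_one {x : ι → X}
    (H : ∀ lam : ι → 𝕜, (∀ j, ‖lam j‖ = 1) → ‖∑ j, lam j • x j‖ ≤ 1)
    {α : ι → 𝕜} {m : ℝ} (hm : 0 ≤ m) (hα : ∀ j, ‖α j‖ ≤ m) :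
    ‖∑ j, α j • x j‖ ≤ m := by
  obtain ⟨g, hg, hgv⟩ := exists_dual_vector'' 𝕜 (∑ j, α j • x j)
  have hg_sum := sum_norm_apply_le_one_of_norm_sum_unimodular_le_one H hg
  calc ‖∑ j, α j • x j‖ = ‖g (∑ j, α j • x j)‖ := by
        rw [hgv, RCLike.norm_ofReal, abs_norm]
    _ = ‖∑ j, α j * g (x j)‖ := by simp only [map_sum, map_smul, smul_eq_mul]
    _ ≤ ∑ j, ‖α j‖ * ‖g (x j)‖ := (norm_sum_le _ _).trans_eq (by simp only [norm_mul])
    _ ≤ ∑ j, m * ‖g (x j)‖ := by gcongr with j; exact hα j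
    _ = m * ∑ j, ‖g (x j)‖ := (mul_sum _ _ _).symm
    _ ≤ m * 1 := by gcongr
    _ = m := mul_one m

lemma norm_le_norm_sum_smul_of_norm_sum_unimodular_le_one {x : ι → X}
    (H : ∀ lam : ι → 𝕜, (∀ j, ‖lam j‖ = 1) → ‖∑ j, lam j • x j‖ ≤ 1)
    {i : ι} (hxi : ‖x i‖ = 1) (α : ι → 𝕜) : ‖α i‖ ≤ ‖∑ j, α j • x j‖ := by
  classical
  obtain ⟨f, hf, hfxi⟩ := exists_dual_vector 𝕜 (x i) (by rw [hxi]; exact one_ne_zero)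
  rw [hxi, RCLike.ofReal_one] at hfxi
  have hf_other : ∀ j ≠ i, f (x j) = 0 := by
    have hsum := sum_norm_apply_le_one_of_norm_sum_unimodular_le_one H hf.le
    rw [← add_sum_erase _ _ (mem_univ i), hfxi, norm_one] at hsum
    intro j hj
    have hle : ‖f (x j)‖ ≤ ∑ l ∈ univ.erase i, ‖f (x l)‖ :=
      single_le_sum (fun l _ => norm_nonneg (f (x l))) (mem_erase.mpr ⟨hj, mem_univ j⟩)
    exact norm_le_zero_iff.mp (by linarith)
  have hf_sum : f (∑ j, α j • x j) = α i := by
    simp only [map_sum, map_smul, smul_eq_mul]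
    rw [sum_eq_single i (fun j _ hj => by rw [hf_other j hj, mul_zero])
      (fun h => absurd (mem_univ i) h), hfxi, mul_one]
  calc ‖α i‖ = ‖f (∑ j, α j • x j)‖ := by rw [hf_sum]
    _ ≤ ‖f‖ * ‖∑ j, α j • x j‖ := f.le_opNorm _
    _ = ‖∑ j, α j • x j‖ := by rw [hf, one_mul]

end UnimodularSums

theorem stmt1 {X : Type*} [NormedAddCommGroup X] [NormedSpace ℂ X]
    (k : ℕ) (x : Fin (k + 2) → X) (hx : ∀ j, ‖x j‖ = 1) :
    (∀ α : Fin (k + 2) → ℂ,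
        ‖∑ j, α j • x j‖ =
          Finset.univ.sup' Finset.univ_nonempty (fun j => ‖α j‖ * ‖x j‖)) ↔
      (∀ lam : Fin (k + 2) → ℂ, (∀ j, ‖lam j‖ = 1) →
        ‖∑ j, lam j • x j‖ = 1) := by
  simp only [hx, mul_one]
  constructor
  · intro h lam hlam
    simp only [h lam, hlam, sup'_const]
  · intro H α
    have H_le : ∀ lam : Fin (k + 2) → ℂ, (∀ j, ‖lam j‖ = 1) → ‖∑ j, lam j • x j‖ ≤ 1 :=
      fun lam hlam => (H lam hlam).le
    obtain ⟨i, -, hi⟩ := exists_mem_eq_sup' univ_nonempty (fun j => ‖α j‖)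
    refine le_antisymm ?_ ?_
    · exact norm_sum_smul_le_of_norm_sum_unimodular_le_one H_le (hi ▸ norm_nonneg (α i))
        (fun j => le_sup' (fun j => ‖α j‖) (mem_univ j))
    · rw [hi]
      exact norm_le_norm_sum_smul_of_norm_sum_unimodular_le_one H_le (hx i) α
end

section
/- Let X, Y be normed spaces and Δ : S(X) → S(Y) a surjective isometry between their unit spheres. Define F : X → Y by F(0) = 0 and F(x) = ‖x‖ Δ(x/‖x‖) for x ≠ 0. Then F is Lipschitz with constant 3, i.e. ‖F(a) − F(b)‖ ≤ 3‖a − b‖ for all a, b ∈ X. -/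
/-!
With `x̂ = x / ‖x‖`, write `F a - F b = ‖a‖ • (Δ â - Δ b̂) + (‖a‖ - ‖b‖) • Δ b̂`. The second term
has norm at most `‖a - b‖`. For the first, `‖a‖ • (â - b̂) = (a - b) - (‖a‖ - ‖b‖) • b̂` gives
`‖a‖ ‖â - b̂‖ ≤ 2 ‖a - b‖`, so a `K`-Lipschitz `Δ` extends to a `(2K + 1)`-Lipschitz `F`.
-/

open Metric NormedSpace

section HomogeneousExtension

variable {X Y : Type*} [NormedAddCommGroup X] [NormedSpace ℝ X]
  [NormedAddCommGroup Y] [NormedSpace ℝ Y]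

lemma norm_normalize_le_one (x : X) : ‖normalize x‖ ≤ 1 := by
  rcases eq_or_ne x 0 with rfl | hx
  · simp
  · exact (norm_normalize hx).le

lemma norm_mul_norm_normalize_sub_le (a b : X) :
    ‖a‖ * ‖normalize a - normalize b‖ ≤ 2 * ‖a - b‖ := by
  have hsplit : ‖a‖ • (normalize a - normalize b) = (a - b) - (‖a‖ - ‖b‖) • normalize b := by
    rw [smul_sub, sub_smul, norm_smul_normalize, norm_smul_normalize]
    abel
  have hdiff : |‖a‖ - ‖b‖| * ‖normalize b‖ ≤ ‖a - b‖ :=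
    calc |‖a‖ - ‖b‖| * ‖normalize b‖ ≤ |‖a‖ - ‖b‖| * 1 :=
          mul_le_mul_of_nonneg_left (norm_normalize_le_one b) (abs_nonneg _)
      _ ≤ ‖a - b‖ := by simpa using abs_norm_sub_norm_le a b
  calc ‖a‖ * ‖normalize a - normalize b‖ = ‖(a - b) - (‖a‖ - ‖b‖) • normalize b‖ := by
        rw [← hsplit, norm_smul, norm_norm]
    _ ≤ ‖a - b‖ + |‖a‖ - ‖b‖| * ‖normalize b‖ := by
        simpa [norm_smul] using norm_sub_le (a - b) ((‖a‖ - ‖b‖) • normalize b)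
    _ ≤ 2 * ‖a - b‖ := by linarith

lemma normalize_mem_sphere {x : X} (hx : x ≠ 0) : normalize x ∈ sphere (0 : X) 1 :=
  mem_sphere_zero_iff_norm.mpr (norm_normalize hx)

open scoped Classical in
noncomputable def homogeneousExtension (Δ : sphere (0 : X) 1 → sphere (0 : Y) 1) (x : X) : Y :=
  if hx : x = 0 then 0 else ‖x‖ • (Δ ⟨normalize x, normalize_mem_sphere hx⟩ : Y)

variable (Δ : sphere (0 : X) 1 → sphere (0 : Y) 1)

lemma homogeneousExtension_of_ne_zero {x : X} (hx : x ≠ 0) :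
    homogeneousExtension Δ x = ‖x‖ • (Δ ⟨normalize x, normalize_mem_sphere hx⟩ : Y) :=
  dif_neg hx

@[simp]
lemma homogeneousExtension_zero : homogeneousExtension Δ 0 = 0 :=
  dif_pos rfl

@[simp]
lemma norm_homogeneousExtension (x : X) : ‖homogeneousExtension Δ x‖ = ‖x‖ := by
  rcases eq_or_ne x 0 with rfl | hx
  · simp
  · rw [homogeneousExtension_of_ne_zero Δ hx, norm_smul, norm_norm,
      mem_sphere_zero_iff_norm.mp (Δ _).2, mul_one]

theorem lipschitzWith_homogeneousExtension {K : NNReal} (hΔ : LipschitzWith K Δ) :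
    LipschitzWith (2 * K + 1) (homogeneousExtension Δ) := by
  refine LipschitzWith.of_dist_le_mul fun a b => ?_
  simp only [dist_eq_norm, NNReal.coe_add, NNReal.coe_mul, NNReal.coe_ofNat, NNReal.coe_one]
  have hK : (0 : ℝ) ≤ K := K.2
  rcases eq_or_ne a 0 with rfl | ha
  · simpa [norm_sub_rev] using le_mul_of_one_le_left (norm_nonneg b) (by linarith)
  rcases eq_or_ne b 0 with rfl | hb
  · simpa using le_mul_of_one_le_left (norm_nonneg a) (by linarith)
  set u := Δ ⟨normalize a, normalize_mem_sphere ha⟩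
  set v := Δ ⟨normalize b, normalize_mem_sphere hb⟩
  have hv : ‖(v : Y)‖ = 1 := mem_sphere_zero_iff_norm.mp v.2
  have huv : ‖(u : Y) - v‖ ≤ K * ‖normalize a - normalize b‖ := by
    have h := hΔ.dist_le_mul ⟨normalize a, normalize_mem_sphere ha⟩
      ⟨normalize b, normalize_mem_sphere hb⟩
    rwa [Subtype.dist_eq, Subtype.dist_eq, dist_eq_norm, dist_eq_norm] at h
  have hsplit : homogeneousExtension Δ a - homogeneousExtension Δ b
      = ‖a‖ • ((u : Y) - v) + (‖a‖ - ‖b‖) • (v : Y) := by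
    rw [homogeneousExtension_of_ne_zero Δ ha, homogeneousExtension_of_ne_zero Δ hb, smul_sub,
      sub_smul]
    abel
  calc ‖homogeneousExtension Δ a - homogeneousExtension Δ b‖
      ≤ ‖a‖ * ‖(u : Y) - v‖ + |‖a‖ - ‖b‖| := by
        simpa [hsplit, norm_smul, hv] using
          norm_add_le (‖a‖ • ((u : Y) - v)) ((‖a‖ - ‖b‖) • (v : Y))
    _ ≤ ‖a‖ * (K * ‖normalize a - normalize b‖) + ‖a - b‖ := by
        gcongr; exact abs_norm_sub_norm_le a b
    _ = K * (‖a‖ * ‖normalize a - normalize b‖) + ‖a - b‖ := by ring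
    _ ≤ K * (2 * ‖a - b‖) + ‖a - b‖ := by
        grw [norm_mul_norm_normalize_sub_le a b]
    _ = (2 * K + 1) * ‖a - b‖ := by ring

end HomogeneousExtension

theorem stmt7 {X Y : Type*} [NormedAddCommGroup X] [NormedSpace ℝ X]
    [NormedAddCommGroup Y] [NormedSpace ℝ Y]
    (Δ : Metric.sphere (0 : X) 1 → Metric.sphere (0 : Y) 1)
    (hiso : ∀ u v, ‖(Δ u : Y) - (Δ v : Y)‖ = ‖(u : X) - (v : X)‖)
    (F : X → Y) (hF0 : F 0 = 0)
    (hF : ∀ (x : X) (hx : x ≠ 0),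
      F x = ‖x‖ • (Δ ⟨‖x‖⁻¹ • x, by
        rw [mem_sphere_zero_iff_norm, norm_smul, norm_inv, norm_norm,
          inv_mul_cancel₀ (fun h => hx (norm_eq_zero.mp h))]⟩ : Y)) :
    ∀ a b : X, ‖F a - F b‖ ≤ 3 * ‖a - b‖ := by
  have hF_eq : F = homogeneousExtension Δ := by
    funext x
    rcases eq_or_ne x 0 with rfl | hx
    · rw [hF0, homogeneousExtension_zero]
    · rw [hF x hx, homogeneousExtension_of_ne_zero Δ hx]
      rfl
  have hΔ : LipschitzWith 1 Δ :=
    (Isometry.of_dist_eq fun u v => by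
      simpa [Subtype.dist_eq, dist_eq_norm] using hiso u v).lipschitz
  intro a b
  rw [hF_eq]
  have h := (lipschitzWith_homogeneousExtension Δ hΔ).norm_sub_le a b
  norm_num at h
  exact h
end

section
/- Let Γ be an infinite set, X a complex Banach space, and Δ : S(ℓ∞(Γ)) → S(X) a surjective isometry. Suppose for each n ∈ Γ and λ ∈ 𝕋 there exists a norm-one functional φ ∈ X* with φ^{-1}({1}) ∩ S(X) = Δ(A(n,λ)), where A(n,λ) = {x ∈ S(ℓ∞(Γ)) : x(n) = λ}. If v is a nonzero partial isometry in ℓ∞(Γ), n ∈ Γ, and φΔ(v) = 0 for every such supporting functional φ of every A(n,λ) (λ ∈ 𝕋), then v(n) = 0. -/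
open scoped ENNReal

theorem stmt11_general {Γ : Type*} {X : Type*} [NormedAddCommGroup X]
    [NormedSpace ℂ X]
    (Δ : Metric.sphere (0 : lp (fun _ : Γ => ℂ) ∞) 1 → Metric.sphere (0 : X) 1)
    (A : Γ → ℂ → Set (Metric.sphere (0 : lp (fun _ : Γ => ℂ) ∞) 1))
    (hA : ∀ m lam, A m lam = {x | (x : lp (fun _ : Γ => ℂ) ∞) m = lam})
    -- existence of supporting functionals
    (hsupp : ∀ (m : Γ) (lam : ℂ), ‖lam‖ = 1 → ∃ φ : X →L[ℂ] ℂ, ‖φ‖ = 1 ∧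
      {y : Metric.sphere (0 : X) 1 | φ (y : X) = 1} = Δ '' A m lam)
    (v : lp (fun _ : Γ => ℂ) ∞)
    (hvpi : ∀ k, ‖v k‖ = 0 ∨ ‖v k‖ = 1)
    (hv1 : v ∈ Metric.sphere (0 : lp (fun _ : Γ => ℂ) ∞) 1)
    (n : Γ)
    (hzero : ∀ (lam : ℂ), ‖lam‖ = 1 → ∀ φ : X →L[ℂ] ℂ, ‖φ‖ = 1 →
      {y : Metric.sphere (0 : X) 1 | φ (y : X) = 1} = Δ '' A n lam →
      φ (Δ ⟨v, hv1⟩ : X) = 0) :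
    v n = 0 := by
  by_contra hvn
  have hnorm : ‖v n‖ = 1 := (hvpi n).resolve_left (norm_ne_zero_iff.mpr hvn)
  obtain ⟨φ, hφ, hlevel⟩ := hsupp n (v n) hnorm
  -- `hA` is elaborated with `A m lam` coerced to a set in `ℓ∞(Γ)`, i.e. as `Subtype.val '' A m lam`.
  obtain ⟨x, hxA, hxv⟩ : v ∈ Subtype.val '' A n (v n) := by rw [hA]; rfl
  obtain rfl : x = ⟨v, hv1⟩ := Subtype.ext hxv
  have hΔv : Δ ⟨v, hv1⟩ ∈ {y : Metric.sphere (0 : X) 1 | φ (y : X) = 1} :=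
    hlevel ▸ Set.mem_image_of_mem Δ hxA
  exact one_ne_zero (hΔv.symm.trans (hzero (v n) hnorm φ hφ hlevel))

theorem stmt11 {Γ : Type*} [Infinite Γ] {X : Type*} [NormedAddCommGroup X]
    [NormedSpace ℂ X] [CompleteSpace X]
    (Δ : Metric.sphere (0 : lp (fun _ : Γ => ℂ) ∞) 1 → Metric.sphere (0 : X) 1)
    (hsurj : Function.Surjective Δ)
    (hiso : ∀ u v, ‖(Δ u : X) - (Δ v : X)‖ =
      ‖(u : lp (fun _ : Γ => ℂ) ∞) - (v : lp (fun _ : Γ => ℂ) ∞)‖)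
    (A : Γ → ℂ → Set (Metric.sphere (0 : lp (fun _ : Γ => ℂ) ∞) 1))
    (hA : ∀ m lam, A m lam = {x | (x : lp (fun _ : Γ => ℂ) ∞) m = lam})
    -- existence of supporting functionals
    (hsupp : ∀ (m : Γ) (lam : ℂ), ‖lam‖ = 1 → ∃ φ : X →L[ℂ] ℂ, ‖φ‖ = 1 ∧
      {y : Metric.sphere (0 : X) 1 | φ (y : X) = 1} = Δ '' A m lam)
    -- each supporting functional annihilates Δ(x) whenever x(m) = 0 (Lemma 2.1)
    (hkill : ∀ (m : Γ) (lam : ℂ), ‖lam‖ = 1 → ∀ φ : X →L[ℂ] ℂ, ‖φ‖ = 1 →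
      {y : Metric.sphere (0 : X) 1 | φ (y : X) = 1} = Δ '' A m lam →
      ∀ x : Metric.sphere (0 : lp (fun _ : Γ => ℂ) ∞) 1,
        (x : lp (fun _ : Γ => ℂ) ∞) m = 0 → φ (Δ x : X) = 0)
    (v : lp (fun _ : Γ => ℂ) ∞)
    (hvpi : ∀ k, ‖v k‖ = 0 ∨ ‖v k‖ = 1) (hvne : v ≠ 0)
    (hv1 : v ∈ Metric.sphere (0 : lp (fun _ : Γ => ℂ) ∞) 1)
    (n : Γ)
    (hzero : ∀ (lam : ℂ), ‖lam‖ = 1 → ∀ φ : X →L[ℂ] ℂ, ‖φ‖ = 1 →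
      {y : Metric.sphere (0 : X) 1 | φ (y : X) = 1} = Δ '' A n lam →
      φ (Δ ⟨v, hv1⟩ : X) = 0) :
    v n = 0 :=
  stmt11_general Δ A hA hsupp v hvpi hv1 n hzero
end

section
/- Let Γ be an infinite set, X a complex Banach space, and Δ : S(ℓ∞(Γ)) → S(X) a surjective isometry. Then for each n ∈ Γ, each λ ∈ 𝕋, Δ(λ e_n) ∈ {λ Δ(e_n), conj(λ) Δ(e_n)}, where e_n is the indicator function of {n}. -/
/-!
Write `e_n` for the indicator of `n`. If `‖ν - 1‖ < 1`, the preimage `z` of `ν Δ(μ e_n)` lies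
within distance `< 1` of `μ e_n`, and it is supported on `{n}`: if `z_j ≠ 0` for some `j ≠ n`, let
`ζ` be the phase of `z_j`. The points `μ e_n ± ζ e_j` are at distance 2 from each other and at
distance 1 from `μ e_n`, so a norming functional `f` of `Δ(μ e_n + ζ e_j) - Δ(μ e_n - ζ e_j)` takes
the values `±1` at these two images and vanishes on `Δ(μ e_n)`, hence on `Δ z`. This forces
`‖z - (μ e_n + ζ e_j)‖ ≥ 1`, whereas coordinatewise this distance is `< 1`.
Since every `λ ∈ 𝕋` is `ν⁴` with `‖ν - 1‖ < 1`, we get `λ Δ(e_n) = Δ(ρ e_n)` for some `ρ ∈ 𝕋`;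
then `‖ρ - 1‖ = ‖λ - 1‖` leaves `ρ ∈ {λ, conj λ}`, and a short case analysis concludes.
-/

open ComplexConjugate
open scoped ENNReal lp

theorem eq_of_norm_le_of_add_eq_two_smul {E : Type*} [NormedAddCommGroup E] [NormedSpace ℝ E]
    [StrictConvexSpace ℝ E] {x y z : E} (hx : ‖x‖ ≤ ‖z‖) (hy : ‖y‖ ≤ ‖z‖)
    (h : x + y = (2 : ℝ) • z) : x = z := by
  have hz : (1 / 2 : ℝ) • x + (1 / 2 : ℝ) • y = z := by
    rw [← smul_add, h, smul_smul]; norm_num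
  by_contra hxz
  have hxy : x ≠ y := by
    rintro rfl
    exact hxz (by rw [← hz, ← add_smul]; norm_num)
  have := norm_combo_lt_of_ne hx hy hxy (a := 1 / 2) (b := 1 / 2) (by norm_num) (by norm_num)
    (by norm_num)
  rw [hz] at this
  exact lt_irrefl _ this

theorem norm_sub_inv_norm_smul_of_norm_le_one {E : Type*} [NormedAddCommGroup E]
    [NormedSpace ℝ E] {x : E} (hx0 : x ≠ 0) (hx : ‖x‖ ≤ 1) : ‖x - ‖x‖⁻¹ • x‖ = 1 - ‖x‖ := by
  have hpos : 0 < ‖x‖ := norm_pos_iff.mpr hx0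
  calc ‖x - ‖x‖⁻¹ • x‖ = ‖(1 - ‖x‖⁻¹) • x‖ := by rw [sub_smul, one_smul]
    _ = (‖x‖⁻¹ - 1) * ‖x‖ := by
        rw [norm_smul, Real.norm_eq_abs, abs_sub_comm, abs_of_nonneg]
        rw [sub_nonneg]; exact one_le_inv_iff₀.mpr ⟨hpos, hx⟩
    _ = 1 - ‖x‖ := by field_simp

theorem norm_smul_sub_self {𝕜 E : Type*} [NormedField 𝕜] [SeminormedAddCommGroup E]
    [NormedSpace 𝕜 E] (c : 𝕜) (x : E) : ‖c • x - x‖ = ‖c - 1‖ * ‖x‖ := by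
  rw [← norm_smul, sub_smul, one_smul]

namespace lp

variable {ι : Type*} [DecidableEq ι]

theorem eq_single_of_apply_eq_zero {E : ι → Type*} [∀ i, NormedAddCommGroup (E i)]
    {p : ℝ≥0∞} {f : lp E p} {i : ι} (h : ∀ j, j ≠ i → f j = 0) : f = lp.single p i (f i) := by
  ext j
  rcases eq_or_ne j i with rfl | hj
  · rw [lp.single_apply_self]
  · rw [h j hj, lp.single_apply_ne p i _ hj]

theorem norm_single_add_single_of_ne {E : ι → Type*} [∀ i, NormedAddCommGroup (E i)]
    {i j : ι} (hij : i ≠ j) (a : E i) (b : E j) :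
    ‖lp.single ∞ i a + lp.single ∞ j b‖ = max ‖a‖ ‖b‖ := by
  refine le_antisymm (norm_le_of_forall_le (le_max_of_le_left (norm_nonneg _)) fun k => ?_)
    (max_le ?_ ?_)
  · rcases eq_or_ne k i with rfl | hki
    · simp [Pi.single_eq_of_ne hij]
    rcases eq_or_ne k j with rfl | hkj
    · simp [Pi.single_eq_of_ne hki]
    · simp [Pi.single_eq_of_ne hki, Pi.single_eq_of_ne hkj]
  · simpa [Pi.single_eq_of_ne hij] using
      norm_apply_le_norm ENNReal.top_ne_zero (lp.single ∞ i a + lp.single ∞ j b) i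
  · simpa [Pi.single_eq_of_ne hij.symm] using
      norm_apply_le_norm ENNReal.top_ne_zero (lp.single ∞ i a + lp.single ∞ j b) j

theorem norm_sub_single_add_single_lt_one {E : Type*} [NormedAddCommGroup E] [NormedSpace ℝ E]
    {z : ℓ^∞(ι, E)} (hz : ‖z‖ ≤ 1) {i j : ι} (hij : i ≠ j) (hzj : z j ≠ 0) {a : E}
    (ha : ‖z - lp.single ∞ i a‖ < 1) :
    ‖z - (lp.single ∞ i a + lp.single ∞ j (‖z j‖⁻¹ • z j))‖ < 1 := by
  have hzj_le : ‖z j‖ ≤ 1 := (norm_apply_le_norm ENNReal.top_ne_zero z j).trans hz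
  have hbound : ‖z - (lp.single ∞ i a + lp.single ∞ j (‖z j‖⁻¹ • z j))‖ ≤
      max ‖z - lp.single ∞ i a‖ (1 - ‖z j‖) := by
    rw [← sub_sub]
    refine norm_le_of_forall_le (le_max_of_le_left (norm_nonneg _)) fun k => ?_
    rcases eq_or_ne k j with rfl | hkj
    · rw [coeFn_sub, Pi.sub_apply, lp.single_apply_self, coeFn_sub, Pi.sub_apply,
        lp.single_apply_ne (E := fun _ => E) ∞ i a hij.symm, sub_zero,
        norm_sub_inv_norm_smul_of_norm_le_one hzj hzj_le]
      exact le_max_right _ _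
    · rw [coeFn_sub, Pi.sub_apply, lp.single_apply_ne (E := fun _ => E) ∞ j _ hkj, sub_zero]
      exact le_max_of_le_left (norm_apply_le_norm ENNReal.top_ne_zero _ k)
  exact hbound.trans_lt (max_lt ha (by linarith [norm_pos_iff.mpr hzj]))

end lp

theorem one_le_norm_smul_sub_of_norm_sub_eq_two {X : Type*} [NormedAddCommGroup X]
    [NormedSpace ℂ X] {u v w : X} (hv : ‖v‖ ≤ 1) (hw : ‖w‖ ≤ 1) (hvw : ‖v - w‖ = 2)
    (huv : ‖u - v‖ ≤ 1) (huw : ‖u - w‖ ≤ 1) (c : ℂ) : 1 ≤ ‖c • u - v‖ := by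
  obtain ⟨f, hf1, hfvw⟩ := exists_dual_vector'' ℂ (v - w)
  have hf (x : X) : ‖f x‖ ≤ ‖x‖ := by simpa using f.le_of_opNorm_le hf1 x
  rw [hvw, map_sub] at hfvw
  have hfv : f v = 1 := by
    refine eq_of_norm_le_of_add_eq_two_smul ((hf v).trans (by simpa using hv))
      (y := -f w) (by simpa using (hf w).trans hw) ?_
    rw [← sub_eq_add_neg, hfvw]; norm_num
  -- `f u` is within 1 of both `f v = 1` and `f w = -1`, so it is their midpoint.
  have hfu : f u = 0 := by
    have := eq_of_norm_le_of_add_eq_two_smul (x := f v - f u) (y := f u - f w) (z := 1)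
      (by rw [norm_one, norm_sub_rev, ← map_sub]; exact (hf _).trans huv)
      (by rw [norm_one, ← map_sub]; exact (hf _).trans huw)
      (by rw [sub_add_sub_cancel, hfvw]; norm_num)
    rwa [hfv, sub_eq_self] at this
  calc (1 : ℝ) = ‖f (c • u - v)‖ := by simp [hfu, hfv]
    _ ≤ ‖c • u - v‖ := hf _

namespace Complex

theorem eq_or_eq_conj_of_norm_sub_one_eq {z w : ℂ} (hn : ‖z‖ = ‖w‖) (h : ‖z - 1‖ = ‖w - 1‖) :
    z = w ∨ z = conj w := by
  have hn2 := congrArg (· ^ 2) hn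
  have h2 := congrArg (· ^ 2) h
  simp only [Complex.sq_norm, normSq_apply, sub_re, sub_im, one_re, one_im, sub_zero] at hn2 h2
  have hre : z.re = w.re := by nlinarith
  have him : (z.im - w.im) * (z.im + w.im) = 0 := by nlinarith
  rcases mul_eq_zero.mp him with him | him
  · exact .inl (ext hre (by linarith))
  · exact .inr (ext (by simpa using hre) (by simp; linarith))

theorem exists_pow_four_eq_of_norm_eq_one {z : ℂ} (hz : ‖z‖ = 1) :
    ∃ w : ℂ, ‖w‖ = 1 ∧ ‖w - 1‖ < 1 ∧ w ^ 4 = z := by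
  refine ⟨exp (I * ↑(arg z / 4)),
    by simpa [mul_comm] using norm_exp_ofReal_mul_I (arg z / 4), ?_, ?_⟩
  · calc ‖exp (I * ↑(arg z / 4)) - 1‖ ≤ ‖arg z / 4‖ := Real.norm_exp_I_mul_ofReal_sub_one_le
      _ ≤ Real.pi / 4 := by
          rw [Real.norm_eq_abs, abs_div, abs_of_pos (by norm_num : (0 : ℝ) < 4)]
          gcongr
          exact abs_arg_le_pi z
      _ < 1 := by linarith [Real.pi_lt_d2]
  · rw [← exp_nat_mul]
    calc exp (↑(4 : ℕ) * (I * ↑(arg z / 4))) = ‖z‖ * exp (arg z * I) := by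
          rw [hz]; push_cast; ring_nf
      _ = z := norm_mul_exp_arg_mul_I z

end Complex

open Metric

noncomputable def unitSingle {Γ : Type*} [DecidableEq Γ] (n : Γ) {a : ℂ} (ha : ‖a‖ = 1) :
    sphere (0 : ℓ^∞(Γ, ℂ)) 1 :=
  ⟨lp.single ∞ n a, by simp [ha]⟩

section SphereIsometry

variable {Γ X : Type*} [DecidableEq Γ] [NormedAddCommGroup X] [NormedSpace ℂ X]
  {Δ : sphere (0 : ℓ^∞(Γ, ℂ)) 1 → sphere (0 : X) 1}

theorem apply_eq_zero_of_apply_eq_smul_apply_unitSingle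
    (hΔ : ∀ u v, ‖(Δ u : X) - Δ v‖ = ‖(u : ℓ^∞(Γ, ℂ)) - v‖) {n j : Γ} (hjn : j ≠ n) {μ : ℂ}
    (hμ : ‖μ‖ = 1) (c : ℂ) {z : sphere (0 : ℓ^∞(Γ, ℂ)) 1}
    (hz : (Δ z : X) = c • (Δ (unitSingle n hμ) : X))
    (hzμ : ‖(z : ℓ^∞(Γ, ℂ)) - lp.single ∞ n μ‖ < 1) : (z : ℓ^∞(Γ, ℂ)) j = 0 := by
  by_contra hzj
  set ζ : ℂ := ‖(z : ℓ^∞(Γ, ℂ)) j‖⁻¹ • (z : ℓ^∞(Γ, ℂ)) j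
  have hζ : ‖ζ‖ = 1 := norm_smul_inv_norm hzj
  have hmem (s : ℂ) (hs : ‖s‖ = 1) :
      lp.single ∞ n μ + lp.single ∞ j s ∈ sphere (0 : ℓ^∞(Γ, ℂ)) 1 := by
    simp [lp.norm_single_add_single_of_ne hjn.symm, hμ, hs]
  have hΔle (w : sphere (0 : ℓ^∞(Γ, ℂ)) 1) : ‖(Δ w : X)‖ ≤ 1 := (norm_eq_of_mem_sphere (Δ w)).le
  have key := one_le_norm_smul_sub_of_norm_sub_eq_two (u := (Δ (unitSingle n hμ) : X))
    (v := Δ ⟨_, hmem ζ hζ⟩) (w := Δ ⟨_, hmem (-ζ) (by rwa [norm_neg])⟩) (hΔle _) (hΔle _)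
    (by
      rw [hΔ]
      simp only [add_sub_add_left_eq_sub, ← lp.single_sub, sub_neg_eq_add]
      simp [← two_mul, hζ]) (by rw [hΔ]; simp [unitSingle, hζ])
    (by rw [hΔ]; simp [unitSingle, hζ]) c
  rw [← hz, hΔ] at key
  exact key.not_gt
    (lp.norm_sub_single_add_single_lt_one (norm_eq_of_mem_sphere z).le hjn.symm hzj hzμ)

theorem exists_smul_apply_unitSingle_eq (hsurj : Function.Surjective Δ)
    (hΔ : ∀ u v, ‖(Δ u : X) - Δ v‖ = ‖(u : ℓ^∞(Γ, ℂ)) - v‖) (n : Γ) {μ ν : ℂ} (hμ : ‖μ‖ = 1)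
    (hν : ‖ν‖ = 1) (hν1 : ‖ν - 1‖ < 1) :
    ∃ (ρ : ℂ) (hρ : ‖ρ‖ = 1), ν • (Δ (unitSingle n hμ) : X) = Δ (unitSingle n hρ) := by
  set U : X := (Δ (unitSingle n hμ) : X)
  have hU : ‖U‖ = 1 := norm_eq_of_mem_sphere _
  obtain ⟨z, hz⟩ := hsurj ⟨ν • U, by rw [mem_sphere_zero_iff_norm, norm_smul, hν, hU, one_mul]⟩
  have hzU : (Δ z : X) = ν • U := congrArg Subtype.val hz
  have hzμ : ‖(z : ℓ^∞(Γ, ℂ)) - lp.single ∞ n μ‖ = ‖ν - 1‖ := by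
    calc ‖(z : ℓ^∞(Γ, ℂ)) - lp.single ∞ n μ‖ = ‖(Δ z : X) - U‖ :=
          (hΔ z (unitSingle n hμ)).symm
      _ = ‖ν - 1‖ := by rw [hzU, norm_smul_sub_self, hU, mul_one]
  have hz_single : (z : ℓ^∞(Γ, ℂ)) = lp.single ∞ n ((z : ℓ^∞(Γ, ℂ)) n) :=
    lp.eq_single_of_apply_eq_zero fun j hjn =>
      apply_eq_zero_of_apply_eq_smul_apply_unitSingle hΔ hjn hμ ν hzU (hzμ ▸ hν1)
  have hρ : ‖(z : ℓ^∞(Γ, ℂ)) n‖ = 1 := by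
    have hz1 := norm_eq_of_mem_sphere z
    rwa [hz_single, lp.norm_single ENNReal.zero_lt_top] at hz1
  exact ⟨_, hρ, by rw [← hzU]; exact congrArg _ (congrArg Δ (Subtype.ext hz_single))⟩

theorem exists_pow_smul_apply_unitSingle_eq (hsurj : Function.Surjective Δ)
    (hΔ : ∀ u v, ‖(Δ u : X) - Δ v‖ = ‖(u : ℓ^∞(Γ, ℂ)) - v‖) (n : Γ) {μ ν : ℂ} (hμ : ‖μ‖ = 1)
    (hν : ‖ν‖ = 1) (hν1 : ‖ν - 1‖ < 1) (m : ℕ) :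
    ∃ (ρ : ℂ) (hρ : ‖ρ‖ = 1), ν ^ m • (Δ (unitSingle n hμ) : X) = Δ (unitSingle n hρ) := by
  induction m with
  | zero => exact ⟨μ, hμ, one_smul _ _⟩
  | succ m ih =>
    obtain ⟨ρ, hρ, h⟩ := ih
    obtain ⟨ρ', hρ', h'⟩ := exists_smul_apply_unitSingle_eq hsurj hΔ n hρ hν hν1
    exact ⟨ρ', hρ', by rw [pow_succ', mul_smul, h, h']⟩

theorem exists_smul_apply_unitSingle_one_eq (hsurj : Function.Surjective Δ)
    (hΔ : ∀ u v, ‖(Δ u : X) - Δ v‖ = ‖(u : ℓ^∞(Γ, ℂ)) - v‖) (n : Γ) {lam : ℂ}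
    (hlam : ‖lam‖ = 1) :
    ∃ (ρ : ℂ) (hρ : ‖ρ‖ = 1), lam • (Δ (unitSingle n norm_one) : X) = Δ (unitSingle n hρ) ∧
      (ρ = lam ∨ ρ = conj lam) := by
  obtain ⟨ν, hν, hν1, rfl⟩ := Complex.exists_pow_four_eq_of_norm_eq_one hlam
  obtain ⟨ρ, hρ, h⟩ := exists_pow_smul_apply_unitSingle_eq hsurj hΔ n norm_one hν hν1 4
  refine ⟨ρ, hρ, h, Complex.eq_or_eq_conj_of_norm_sub_one_eq (hρ.trans hlam.symm) ?_⟩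
  have hu : ‖(Δ (unitSingle n norm_one) : X)‖ = 1 := norm_eq_of_mem_sphere _
  calc ‖ρ - 1‖ = ‖lp.single ∞ n ρ - (lp.single ∞ n 1 : ℓ^∞(Γ, ℂ))‖ := by
        rw [← lp.single_sub, lp.norm_single ENNReal.zero_lt_top]
    _ = ‖ν ^ 4 • (Δ (unitSingle n norm_one) : X) - Δ (unitSingle n norm_one)‖ := by
        rw [h, hΔ]; rfl
    _ = ‖ν ^ 4 - 1‖ := by rw [norm_smul_sub_self, hu, mul_one]

theorem apply_unitSingle_eq_smul_or_eq_conj_smul (hsurj : Function.Surjective Δ)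
    (hΔ : ∀ u v, ‖(Δ u : X) - Δ v‖ = ‖(u : ℓ^∞(Γ, ℂ)) - v‖) (n : Γ) {lam : ℂ}
    (hlam : ‖lam‖ = 1) :
    (Δ (unitSingle n hlam) : X) = lam • (Δ (unitSingle n norm_one) : X) ∨
      (Δ (unitSingle n hlam) : X) = conj lam • (Δ (unitSingle n norm_one) : X) := by
  have hlamc : ‖conj lam‖ = 1 := by rwa [Complex.norm_conj]
  obtain ⟨ρ, hρ, h, rfl | rfl⟩ := exists_smul_apply_unitSingle_one_eq hsurj hΔ n hlam
  · exact .inl h.symm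
  obtain ⟨σ, hσ, h', rfl | rfl⟩ := exists_smul_apply_unitSingle_one_eq hsurj hΔ n hlamc
  · have hreal : lam = conj lam :=
      smul_left_injective ℂ (ne_zero_of_mem_unit_sphere _) (h.trans h'.symm)
    left
    rw [h]
    congr
  · right
    rw [h']
    congr
    simp

end SphereIsometry

theorem stmt12_general {Γ : Type*} [DecidableEq Γ] {X : Type*} [NormedAddCommGroup X]
    [NormedSpace ℂ X]
    (Δ : Metric.sphere (0 : lp (fun _ : Γ => ℂ) ∞) 1 → Metric.sphere (0 : X) 1)
    (hsurj : Function.Surjective Δ)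
    (hiso : ∀ u v, ‖(Δ u : X) - (Δ v : X)‖ =
      ‖(u : lp (fun _ : Γ => ℂ) ∞) - (v : lp (fun _ : Γ => ℂ) ∞)‖)
    (n : Γ) (lam : ℂ) (hlam : ‖lam‖ = 1)
    (en : lp (fun _ : Γ => ℂ) ∞) (hen : ∀ k, en k = if k = n then 1 else 0)
    (h1 : en ∈ Metric.sphere (0 : lp (fun _ : Γ => ℂ) ∞) 1)
    (h2 : lam • en ∈ Metric.sphere (0 : lp (fun _ : Γ => ℂ) ∞) 1) :
    (Δ ⟨lam • en, h2⟩ : X) = lam • (Δ ⟨en, h1⟩ : X) ∨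
      (Δ ⟨lam • en, h2⟩ : X) = (starRingEnd ℂ) lam • (Δ ⟨en, h1⟩ : X) := by
  obtain rfl : en = lp.single ∞ n 1 := lp.ext (funext fun k => by simp [hen, Pi.single_apply])
  have hlam_single : (⟨lam • lp.single ∞ n 1, h2⟩ : sphere (0 : ℓ^∞(Γ, ℂ)) 1) =
      unitSingle n hlam := Subtype.ext (by simp [unitSingle, ← lp.single_smul])
  rw [hlam_single]
  exact apply_unitSingle_eq_smul_or_eq_conj_smul hsurj hiso n hlam

theorem stmt12 {Γ : Type*} [Infinite Γ] [DecidableEq Γ] {X : Type*} [NormedAddCommGroup X]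
    [NormedSpace ℂ X] [CompleteSpace X]
    (Δ : Metric.sphere (0 : lp (fun _ : Γ => ℂ) ∞) 1 → Metric.sphere (0 : X) 1)
    (hsurj : Function.Surjective Δ)
    (hiso : ∀ u v, ‖(Δ u : X) - (Δ v : X)‖ =
      ‖(u : lp (fun _ : Γ => ℂ) ∞) - (v : lp (fun _ : Γ => ℂ) ∞)‖)
    (n : Γ) (lam : ℂ) (hlam : ‖lam‖ = 1)
    (en : lp (fun _ : Γ => ℂ) ∞) (hen : ∀ k, en k = if k = n then 1 else 0)
    (h1 : en ∈ Metric.sphere (0 : lp (fun _ : Γ => ℂ) ∞) 1)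
    (h2 : lam • en ∈ Metric.sphere (0 : lp (fun _ : Γ => ℂ) ∞) 1) :
    (Δ ⟨lam • en, h2⟩ : X) = lam • (Δ ⟨en, h1⟩ : X) ∨
      (Δ ⟨lam • en, h2⟩ : X) = (starRingEnd ℂ) lam • (Δ ⟨en, h1⟩ : X) :=
  stmt12_general Δ hsurj hiso n lam hlam en hen h1 h2
end

section
/- Let Γ be an infinite set, X a complex Banach space, Δ : S(ℓ∞(Γ)) → S(X) a surjective isometry, and v a nonzero partial isometry in ℓ∞(Γ). Then for each λ ∈ 𝕋, λ Δ(v) = Δ(λ ⊙ v), where (λ ⊙ v)(k) = σ_k(λ)v(k) and σ_k is the identity or conjugation determined by the action of Δ on λe_k. -/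
open scoped ENNReal

/-!
Surjectivity gives `w` with `Δ w = λ Δ v`. If `σ_k μ = λ σ_k μ'` for unimodular `μ, μ'`, then
`Δ (μ e_k) = σ_k(μ) Δ e_k = λ Δ (μ' e_k)`, so the isometry gives
`‖w - μ e_k‖ = ‖v - μ' e_k‖`. These distances determine every coordinate of `w`: when `v_k = 0`
they are all at most `1`, forcing `w_k = 0`; when `|v_k| = 1`, taking `μ' = -v_k` gives
distance `2`, forcing `w_k = σ_k(λ) v_k`. Both conclusions follow from the parallelogram law
in `ℂ`, and together they say `w = λ ⊙ v`.
-/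

section ParallelogramLaw

variable (𝕜 : Type*) {E : Type*} [RCLike 𝕜] [NormedAddCommGroup E] [InnerProductSpace 𝕜 E]

include 𝕜 in
theorem eq_zero_of_norm_sub_le_of_norm_add_le {a u : E} (hsub : ‖a - u‖ ≤ ‖u‖)
    (hadd : ‖a + u‖ ≤ ‖u‖) : a = 0 := by
  have hpar := parallelogram_law_with_norm 𝕜 a u
  have : ‖a‖ ^ 2 ≤ 0 := by nlinarith [norm_nonneg (a - u), norm_nonneg (a + u)]
  exact norm_eq_zero.mp (by nlinarith [norm_nonneg a])

include 𝕜 in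
theorem eq_of_norm_le_of_two_mul_le_norm_add {a b : E} {r : ℝ} (ha : ‖a‖ ≤ r) (hb : ‖b‖ ≤ r)
    (hab : 2 * r ≤ ‖a + b‖) : a = b := by
  have hpar := parallelogram_law_with_norm 𝕜 a b
  have hr : 0 ≤ r := (norm_nonneg a).trans ha
  have : ‖a - b‖ ^ 2 ≤ 0 := by
    nlinarith [norm_nonneg a, norm_nonneg b, mul_le_mul hab hab (by positivity) (norm_nonneg _)]
  exact sub_eq_zero.mp (norm_eq_zero.mp (by nlinarith [norm_nonneg (a - b)]))

end ParallelogramLaw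

theorem norm_sub_eq_norm_sub_of_eq_smul {E F : Type*} [SeminormedAddCommGroup E]
    [SeminormedAddCommGroup F] [NormedSpace ℂ F] {s : Set E} {t : Set F} (Δ : s → t)
    (hiso : ∀ a b, ‖(Δ a : F) - Δ b‖ = ‖(a : E) - b‖) {c : ℂ} (hc : ‖c‖ = 1) {w v a b : s}
    (hw : (Δ w : F) = c • Δ v) (ha : (Δ a : F) = c • Δ b) :
    ‖(w : E) - a‖ = ‖(v : E) - b‖ := by
  rw [← hiso, ← hiso, hw, ha, ← smul_sub, norm_smul, hc, one_mul]

namespace lp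

variable {Γ : Type*} [DecidableEq Γ]

section Single

variable {E : Γ → Type*} [∀ i, NormedAddCommGroup (E i)]

theorem norm_apply_sub_le_norm_sub_single (f : lp E ∞) (k : Γ) (c : E k) :
    ‖f k - c‖ ≤ ‖f - lp.single ∞ k c‖ := by
  simpa using lp.norm_apply_le_norm ENNReal.top_ne_zero (f - lp.single ∞ k c) k

theorem norm_sub_single_le {f : lp E ∞} {k : Γ} {c : E k} {r : ℝ} (hr : 0 ≤ r)
    (hk : ‖f k - c‖ ≤ r) (hne : ∀ m ≠ k, ‖f m‖ ≤ r) : ‖f - lp.single ∞ k c‖ ≤ r := by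
  refine lp.norm_le_of_forall_le hr fun m => ?_
  rcases eq_or_ne m k with rfl | hm
  · simpa using hk
  · simpa [Pi.single_eq_of_ne hm] using hne m hm

end Single

section InnerProductSpace

variable (𝕜 : Type*) {E : Type*} [RCLike 𝕜] [NormedAddCommGroup E] [InnerProductSpace 𝕜 E]

include 𝕜 in
theorem apply_eq_zero_of_norm_sub_single_le {f : lp (fun _ : Γ => E) ∞} {k : Γ} {u : E}
    (hsub : ‖f - lp.single ∞ k u‖ ≤ ‖u‖) (hadd : ‖f - lp.single ∞ k (-u)‖ ≤ ‖u‖) :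
    f k = 0 := by
  refine eq_zero_of_norm_sub_le_of_norm_add_le 𝕜 (u := u)
    ((norm_apply_sub_le_norm_sub_single f k u).trans hsub) ?_
  simpa using (norm_apply_sub_le_norm_sub_single f k (-u)).trans hadd

include 𝕜 in
theorem apply_eq_of_two_le_norm_sub_single_neg {f : lp (fun _ : Γ => E) ∞} {k : Γ} {z : E}
    (hf : ‖f‖ ≤ 1) (hz : ‖z‖ = 1) (h : 2 ≤ ‖f - lp.single ∞ k (-z)‖) : f k = z := by
  have hcoord : ∀ m, ‖f m‖ ≤ 1 := fun m => (lp.norm_apply_le_norm ENNReal.top_ne_zero f m).trans hf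
  have hle : ‖f - lp.single ∞ k (-z)‖ ≤ max ‖f k + z‖ 1 :=
    norm_sub_single_le (zero_le_one.trans (le_max_right _ _)) (by simp)
      fun m _ => (hcoord m).trans (le_max_right _ _)
  have hadd : 2 * 1 ≤ ‖f k + z‖ := by
    rcases le_max_iff.mp (h.trans hle) with h' | h' <;> linarith
  exact eq_of_norm_le_of_two_mul_le_norm_add 𝕜 (hcoord k) hz.le hadd

end InnerProductSpace

theorem norm_sub_single_le_one {E : Type*} [NormedAddCommGroup E] {f : lp (fun _ : Γ => E) ∞}
    (hf : ‖f‖ ≤ 1) {k : Γ} (hk : f k = 0) {c : E} (hc : ‖c‖ ≤ 1) :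
    ‖f - lp.single ∞ k c‖ ≤ 1 :=
  norm_sub_single_le zero_le_one (by simp [hk, hc])
    fun m _ => (lp.norm_apply_le_norm ENNReal.top_ne_zero f m).trans hf

theorem two_le_norm_sub_single_neg_apply {E : Type*} [NormedAddCommGroup E] [NormedSpace ℝ E]
    {f : lp (fun _ : Γ => E) ∞} {k : Γ} (hk : ‖f k‖ = 1) : 2 ≤ ‖f - lp.single ∞ k (-f k)‖ := by
  have h := norm_apply_sub_le_norm_sub_single f k (-f k)
  rwa [sub_neg_eq_add, ← two_smul ℝ, norm_smul, hk, mul_one, Real.norm_two] at h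

end lp

section SphereIsometry

variable {Γ : Type*} [DecidableEq Γ] {X : Type*} [NormedAddCommGroup X] [NormedSpace ℂ X]
  {Δ : Metric.sphere (0 : lp (fun _ : Γ => ℂ) ∞) 1 → Metric.sphere (0 : X) 1} {σ : Γ → ℂ → ℂ}
  (hiso : ∀ u v, ‖(Δ u : X) - (Δ v : X)‖ =
    ‖(u : lp (fun _ : Γ => ℂ) ∞) - (v : lp (fun _ : Γ => ℂ) ∞)‖)
  (hσΔ : ∀ (k : Γ) (ek : lp (fun _ : Γ => ℂ) ∞),
    (∀ m, ek m = if m = k then 1 else 0) → ∀ lam : ℂ, ‖lam‖ = 1 →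
    ∀ (h1 : ek ∈ Metric.sphere (0 : lp (fun _ : Γ => ℂ) ∞) 1)
      (h2 : lam • ek ∈ Metric.sphere (0 : lp (fun _ : Γ => ℂ) ∞) 1),
      (Δ ⟨lam • ek, h2⟩ : X) = σ k lam • (Δ ⟨ek, h1⟩ : X))
  {lam : ℂ} (hlam : ‖lam‖ = 1) {w v : Metric.sphere (0 : lp (fun _ : Γ => ℂ) ∞) 1}
  (hw : (Δ w : X) = lam • (Δ v : X))

include hiso hσΔ hlam hw

theorem norm_sub_single_eq_of_eq_smul {k : Γ} {μ μ' : ℂ} (hμ : ‖μ‖ = 1) (hμ' : ‖μ'‖ = 1)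
    (hrel : σ k μ = lam * σ k μ') :
    ‖(w : lp (fun _ : Γ => ℂ) ∞) - lp.single ∞ k μ‖ =
      ‖(v : lp (fun _ : Γ => ℂ) ∞) - lp.single ∞ k μ'‖ := by
  set e : lp (fun _ : Γ => ℂ) ∞ := lp.single ∞ k 1 with he_def
  have hek : ∀ m, e m = if m = k then 1 else 0 := fun m => by simp [e, Pi.single_apply]
  have hsingle : ∀ c : ℂ, lp.single ∞ k c = c • e := fun c => by
    rw [he_def, ← lp.single_smul, smul_eq_mul, mul_one]
  have hmem : ∀ c : ℂ, ‖c‖ = 1 → c • e ∈ Metric.sphere (0 : lp (fun _ : Γ => ℂ) ∞) 1 :=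
    fun c hc => by simpa [← hsingle] using hc
  have he : e ∈ Metric.sphere (0 : lp (fun _ : Γ => ℂ) ∞) 1 := by simpa using hmem 1 norm_one
  rw [hsingle μ, hsingle μ']
  refine norm_sub_eq_norm_sub_of_eq_smul Δ hiso hlam (a := ⟨_, hmem μ hμ⟩)
    (b := ⟨_, hmem μ' hμ'⟩) hw ?_
  rw [hσΔ k _ hek μ hμ he, hσΔ k _ hek μ' hμ' he, hrel, mul_smul]

theorem apply_eq_of_eq_smul (hσ : ∀ k, σ k = id ∨ σ k = starRingEnd ℂ)
    (hvpi : ∀ k, ‖(v : lp (fun _ : Γ => ℂ) ∞) k‖ = 0 ∨ ‖(v : lp (fun _ : Γ => ℂ) ∞) k‖ = 1)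
    (k : Γ) : (w : lp (fun _ : Γ => ℂ) ∞) k = σ k lam * (v : lp (fun _ : Γ => ℂ) ∞) k := by
  have hσnorm : ∀ x, ‖σ k x‖ = ‖x‖ := fun x => by rcases hσ k with h | h <;> simp [h]
  have hw1 : ‖(w : lp (fun _ : Γ => ℂ) ∞)‖ ≤ 1 := (mem_sphere_zero_iff_norm.mp w.2).le
  have hv1 : ‖(v : lp (fun _ : Γ => ℂ) ∞)‖ ≤ 1 := (mem_sphere_zero_iff_norm.mp v.2).le
  rcases hvpi k with hvk | hvk
  · have hlam0 : lam ≠ 0 := norm_ne_zero_iff.mp (hlam ▸ one_ne_zero)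
    have hσinv : ∀ x, σ k (σ k x) = x := fun x => by rcases hσ k with h | h <;> simp [h]
    have hdist : ∀ μ : ℂ, ‖μ‖ = 1 → ‖(w : lp (fun _ : Γ => ℂ) ∞) - lp.single ∞ k μ‖ ≤ 1 :=
      fun μ hμ => by
        have hμ' : ‖σ k (lam⁻¹ * σ k μ)‖ = 1 := by simp [hσnorm, hlam, hμ]
        rw [norm_sub_single_eq_of_eq_smul hiso hσΔ hlam hw hμ hμ'
          (by rw [hσinv, mul_inv_cancel_left₀ hlam0])]
        exact lp.norm_sub_single_le_one hv1 (norm_eq_zero.mp hvk) hμ'.le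
    rw [norm_eq_zero.mp hvk, mul_zero]
    exact lp.apply_eq_zero_of_norm_sub_single_le ℂ (u := (1 : ℂ))
      (by simpa using hdist 1 norm_one) (by simpa using hdist (-1) (by simp))
  · have hz : ‖σ k lam * (v : lp (fun _ : Γ => ℂ) ∞) k‖ = 1 := by
      rw [norm_mul, hσnorm, hlam, hvk, one_mul]
    refine lp.apply_eq_of_two_le_norm_sub_single_neg ℂ hw1 hz ?_
    rw [norm_sub_single_eq_of_eq_smul hiso hσΔ hlam hw (by rwa [norm_neg])
      (μ' := -(v : lp (fun _ : Γ => ℂ) ∞) k) (by rwa [norm_neg])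
      (by rcases hσ k with h | h <;> simp [h])]
    exact lp.two_le_norm_sub_single_neg_apply hvk

end SphereIsometry

theorem stmt13_general {Γ : Type*} [DecidableEq Γ] {X : Type*} [NormedAddCommGroup X]
    [NormedSpace ℂ X]
    (Δ : Metric.sphere (0 : lp (fun _ : Γ => ℂ) ∞) 1 → Metric.sphere (0 : X) 1)
    (hsurj : Function.Surjective Δ)
    (hiso : ∀ u v, ‖(Δ u : X) - (Δ v : X)‖ =
      ‖(u : lp (fun _ : Γ => ℂ) ∞) - (v : lp (fun _ : Γ => ℂ) ∞)‖)
    (σ : Γ → ℂ → ℂ) (hσ : ∀ k, σ k = id ∨ σ k = (starRingEnd ℂ))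
    -- σ is determined by the action of Δ on λ e_k
    (hσΔ : ∀ (k : Γ) (ek : lp (fun _ : Γ => ℂ) ∞),
      (∀ m, ek m = if m = k then 1 else 0) → ∀ lam : ℂ, ‖lam‖ = 1 →
      ∀ (h1 : ek ∈ Metric.sphere (0 : lp (fun _ : Γ => ℂ) ∞) 1)
        (h2 : lam • ek ∈ Metric.sphere (0 : lp (fun _ : Γ => ℂ) ∞) 1),
        (Δ ⟨lam • ek, h2⟩ : X) = σ k lam • (Δ ⟨ek, h1⟩ : X))
    (odot : ℂ → lp (fun _ : Γ => ℂ) ∞ → lp (fun _ : Γ => ℂ) ∞)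
    (hodot : ∀ α a m, odot α a m = σ m α * a m)
    (v : lp (fun _ : Γ => ℂ) ∞)
    (hvpi : ∀ k, ‖v k‖ = 0 ∨ ‖v k‖ = 1)
    (hv1 : v ∈ Metric.sphere (0 : lp (fun _ : Γ => ℂ) ∞) 1)
    (lam : ℂ) (hlam : ‖lam‖ = 1)
    (hlv : odot lam v ∈ Metric.sphere (0 : lp (fun _ : Γ => ℂ) ∞) 1) :
    lam • (Δ ⟨v, hv1⟩ : X) = (Δ ⟨odot lam v, hlv⟩ : X) := by
  obtain ⟨w, hw⟩ := hsurj ⟨lam • (Δ ⟨v, hv1⟩ : X), by simp [norm_smul, hlam]⟩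
  have hwX : (Δ w : X) = lam • (Δ ⟨v, hv1⟩ : X) := congrArg Subtype.val hw
  have hweq : w = ⟨odot lam v, hlv⟩ := Subtype.ext <| lp.ext <| funext fun k => by
    rw [hodot]
    exact apply_eq_of_eq_smul hiso hσΔ hlam hwX hσ hvpi k
  rw [← hweq, hwX]

theorem stmt13 {Γ : Type*} [Infinite Γ] [DecidableEq Γ] {X : Type*} [NormedAddCommGroup X]
    [NormedSpace ℂ X] [CompleteSpace X]
    (Δ : Metric.sphere (0 : lp (fun _ : Γ => ℂ) ∞) 1 → Metric.sphere (0 : X) 1)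
    (hsurj : Function.Surjective Δ)
    (hiso : ∀ u v, ‖(Δ u : X) - (Δ v : X)‖ =
      ‖(u : lp (fun _ : Γ => ℂ) ∞) - (v : lp (fun _ : Γ => ℂ) ∞)‖)
    (σ : Γ → ℂ → ℂ) (hσ : ∀ k, σ k = id ∨ σ k = (starRingEnd ℂ))
    -- σ is determined by the action of Δ on λ e_k
    (hσΔ : ∀ (k : Γ) (ek : lp (fun _ : Γ => ℂ) ∞),
      (∀ m, ek m = if m = k then 1 else 0) → ∀ lam : ℂ, ‖lam‖ = 1 →
      ∀ (h1 : ek ∈ Metric.sphere (0 : lp (fun _ : Γ => ℂ) ∞) 1)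
        (h2 : lam • ek ∈ Metric.sphere (0 : lp (fun _ : Γ => ℂ) ∞) 1),
        (Δ ⟨lam • ek, h2⟩ : X) = σ k lam • (Δ ⟨ek, h1⟩ : X))
    (odot : ℂ → lp (fun _ : Γ => ℂ) ∞ → lp (fun _ : Γ => ℂ) ∞)
    (hodot : ∀ α a m, odot α a m = σ m α * a m)
    (v : lp (fun _ : Γ => ℂ) ∞)
    (hvpi : ∀ k, ‖v k‖ = 0 ∨ ‖v k‖ = 1) (hvne : v ≠ 0)
    (hv1 : v ∈ Metric.sphere (0 : lp (fun _ : Γ => ℂ) ∞) 1)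
    (lam : ℂ) (hlam : ‖lam‖ = 1)
    (hlv : odot lam v ∈ Metric.sphere (0 : lp (fun _ : Γ => ℂ) ∞) 1) :
    lam • (Δ ⟨v, hv1⟩ : X) = (Δ ⟨odot lam v, hlv⟩ : X) :=
  stmt13_general Δ hsurj hiso σ hσ hσΔ odot hodot v hvpi hv1 lam hlam hlv
end

section
/- Let Γ be an infinite set and X a complex Banach space, and let Δ : S(ℓ∞(Γ)) → S(X) be a surjective isometry. Assume that the homogeneous extension F(x) = ‖x‖Δ(x/‖x‖), F(0)=0, satisfies F(a+b) = F(a)+F(b) whenever a, b are finite linear combinations ∑ α_j ⊙ v_j, ∑ β_j ⊙ v_j over a common family of mutually orthogonal nonzero partial isometries. Then F is additive on all of ℓ∞(Γ), hence real-linear, and is a surjective real-linear isometry extending Δ. -/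
/-!
The homogeneous extension `F` of a surjective isometry between unit spheres preserves norms, is
surjective and is `3`-Lipschitz. By continuity, the set of pairs `(a, b)` with
`F (a + b) = F a + F b` is closed, so it suffices that it is dense. In `ℓ^∞(Γ)` it is: uniformly
approximate `m ↦ (a m, b m)` by a function with finitely many values and refine its fibres by the
value of `σ m`; the indicators of these fibres are mutually orthogonal partial isometries, over
which both approximants are algebraic. A continuous additive map is real-linear, and additivity
turns `‖F x‖ = ‖x‖` into `‖F a - F b‖ = ‖a - b‖`.
-/

open scoped ENNReal lp

open Metric Set Function

theorem norm_mul_norm_inv_norm_smul_sub_le {E : Type*} [NormedAddCommGroup E] [NormedSpace ℝ E]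
    (x : E) {y : E} (hy : y ≠ 0) :
    ‖x‖ * ‖‖x‖⁻¹ • x - ‖y‖⁻¹ • y‖ ≤ 2 * ‖x - y‖ := by
  rcases eq_or_ne x 0 with rfl | hx
  · simp
  have hnx : ‖x‖ ≠ 0 := norm_ne_zero_iff.2 hx
  have hny : 0 < ‖y‖ := norm_pos_iff.2 hy
  calc ‖x‖ * ‖‖x‖⁻¹ • x - ‖y‖⁻¹ • y‖
      = ‖(x - y) + (1 - ‖x‖ * ‖y‖⁻¹) • y‖ := by
        rw [← norm_norm x, ← norm_smul, norm_norm, smul_sub, smul_inv_smul₀ hnx, smul_smul]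
        congr 1
        module
    _ ≤ ‖x - y‖ + |1 - ‖x‖ * ‖y‖⁻¹| * ‖y‖ := by
        rw [← Real.norm_eq_abs, ← norm_smul]
        exact norm_add_le _ _
    _ = ‖x - y‖ + |‖y‖ - ‖x‖| := by
        rw [← abs_of_pos hny, ← abs_mul, abs_of_pos hny]
        congr 2
        field_simp
    _ ≤ 2 * ‖x - y‖ := by
        linarith [abs_norm_sub_norm_le y x, norm_sub_rev y x]

theorem map_add_of_dense {E X : Type*} [TopologicalSpace E] [Add E] [ContinuousAdd E]
    [TopologicalSpace X] [Add X] [ContinuousAdd X] [T2Space X] {F : E → X}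
    (hF : Continuous F) (hdense : Dense {p : E × E | F (p.1 + p.2) = F p.1 + F p.2}) (a b : E) :
    F (a + b) = F a + F b :=
  congrFun (Continuous.ext_on hdense (f := fun p : E × E => F (p.1 + p.2)) (by fun_prop)
    (by fun_prop) fun _ hp => hp) (a, b)

theorem exists_finite_range_dist_lt {α Y : Type*} [PseudoMetricSpace Y] {f : α → Y}
    (hf : TotallyBounded (range f)) {ε : ℝ} (hε : 0 < ε) :
    ∃ g : α → Y, (range g).Finite ∧ ∀ m, dist (f m) (g m) < ε := by
  obtain ⟨t, -, ht, hcover⟩ := finite_approx_of_totallyBounded hf ε hε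
  have hnear : ∀ m, ∃ y ∈ t, dist (f m) y < ε := fun m => by
    simpa using hcover (mem_range_self m)
  choose g hgt hg using hnear
  exact ⟨g, ht.subset (range_subset_iff.2 hgt), hg⟩

theorem exists_surjective_fin_comp_eq {α K : Type*} [Nonempty α] {κ : α → K}
    (hκ : (range κ).Finite) :
    ∃ (k : ℕ) (τ : α → Fin (k + 1)) (c : Fin (k + 1) → K), Surjective τ ∧ ∀ m, c (τ m) = κ m := by
  have := hκ.to_subtype
  obtain ⟨n, ⟨e⟩⟩ := Finite.exists_equiv_fin (range κ)
  obtain ⟨k, rfl⟩ : ∃ k, n = k + 1 :=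
    Nat.exists_eq_succ_of_ne_zero (Fin.pos (e ⟨_, mem_range_self (Classical.arbitrary α)⟩)).ne'
  exact ⟨k, e ∘ rangeFactorization κ, Subtype.val ∘ e.symm,
    e.surjective.comp rangeFactorization_surjective, fun m => by simp [rangeFactorization]⟩

section fiberIndicator

variable {Γ ι : Type*} [DecidableEq ι]

def fiberIndicator (κ : Γ → ι) (i : ι) : ℓ^∞(Γ, ℂ) :=
  ⟨fun m => if κ m = i then 1 else 0,
    memℓp_infty ⟨1, by rintro _ ⟨m, rfl⟩; dsimp only; split_ifs <;> simp⟩⟩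

@[simp]
theorem fiberIndicator_apply (κ : Γ → ι) (i : ι) (m : Γ) :
    fiberIndicator κ i m = if κ m = i then 1 else 0 :=
  rfl

theorem norm_fiberIndicator_apply (κ : Γ → ι) (i : ι) (m : Γ) :
    ‖fiberIndicator κ i m‖ = 0 ∨ ‖fiberIndicator κ i m‖ = 1 := by
  by_cases h : κ m = i <;> simp [h]

theorem fiberIndicator_ne_zero {κ : Γ → ι} {i : ι} (hi : i ∈ range κ) : fiberIndicator κ i ≠ 0 := by
  obtain ⟨m, rfl⟩ := hi
  intro h
  simpa using congrArg (· m) h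

theorem fiberIndicator_mul_fiberIndicator_apply {κ : Γ → ι} {i j : ι} (hij : i ≠ j) (m : Γ) :
    fiberIndicator κ i m * fiberIndicator κ j m = 0 := by
  by_cases h : κ m = i <;> simp [h, hij]

theorem sum_odot_fiberIndicator_apply [Fintype ι] {σ : Γ → ℂ → ℂ}
    {odot : ℂ → ℓ^∞(Γ, ℂ) → ℓ^∞(Γ, ℂ)} (hodot : ∀ α a m, odot α a m = σ m α * a m)
    (κ : Γ → ι) (c : ι → ℂ) (m : Γ) :
    (∑ i, odot (c i) (fiberIndicator κ i)) m = σ m (c (κ m)) := by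
  rw [lp.coeFn_sum, Finset.sum_apply]
  simp [hodot]

end fiberIndicator

theorem exists_orthogonal_partialIsometry_approx {Γ : Type*} [Nonempty Γ] {σ : Γ → ℂ → ℂ}
    (hσ : ∀ m, σ m = id ∨ σ m = starRingEnd ℂ) {odot : ℂ → ℓ^∞(Γ, ℂ) → ℓ^∞(Γ, ℂ)}
    (hodot : ∀ α a m, odot α a m = σ m α * a m) (a b : ℓ^∞(Γ, ℂ)) {ε : ℝ} (hε : 0 < ε) :
    ∃ (k : ℕ) (v : Fin (k + 1) → ℓ^∞(Γ, ℂ)) (α β : Fin (k + 1) → ℂ),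
      (∀ j m, ‖v j m‖ = 0 ∨ ‖v j m‖ = 1) ∧ (∀ j, v j ≠ 0) ∧
      (∀ i j, i ≠ j → ∀ m, v i m * v j m = 0) ∧
      ‖a - ∑ j, odot (α j) (v j)‖ ≤ ε ∧ ‖b - ∑ j, odot (β j) (v j)‖ ≤ ε := by
  have hbdd : TotallyBounded (range fun m => (a m, b m)) := by
    refine (isCompact_closedBall (0 : ℂ × ℂ) (max ‖a‖ ‖b‖)).totallyBounded.subset ?_
    rintro _ ⟨m, rfl⟩
    rw [mem_closedBall_zero_iff, Prod.norm_def]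
    exact max_le_max (lp.norm_apply_le_norm ENNReal.top_ne_zero a m)
      (lp.norm_apply_le_norm ENNReal.top_ne_zero b m)
  obtain ⟨g, hg_fin, hg⟩ := exists_finite_range_dist_lt hbdd hε
  have hσ_fin : (range σ).Finite :=
    (toFinite ({id, ⇑(starRingEnd ℂ)} : Set (ℂ → ℂ))).subset <| range_subset_iff.2 fun m => by
      rcases hσ m with h | h <;> simp [h]
  obtain ⟨k, κ, c, hκ, hc⟩ := exists_surjective_fin_comp_eq
    ((hg_fin.prod hσ_fin).subset (range_pair_subset g σ))
  have hg' : ∀ m, dist (a m) (g m).1 < ε ∧ dist (b m) (g m).2 < ε := fun m => by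
    simpa only [Prod.dist_eq, max_lt_iff] using hg m
  -- On each fibre the coefficients are the approximating values twisted by that fibre's `σ`,
  -- which `σ m` undoes since it is an involution.
  have hσσ : ∀ m z, σ m (σ m z) = z := fun m z => by rcases hσ m with h | h <;> simp [h]
  have hsum : ∀ (p : ℂ × ℂ → ℂ) m,
      (∑ j, odot ((c j).2 (p (c j).1)) (fiberIndicator κ j)) m = p (g m) := fun p m => by
    rw [sum_odot_fiberIndicator_apply hodot, hc, hσσ]
  refine ⟨k, fiberIndicator κ, fun j => (c j).2 (c j).1.1, fun j => (c j).2 (c j).1.2,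
    norm_fiberIndicator_apply κ, fun j => fiberIndicator_ne_zero (hκ j),
    fun i j hij => fiberIndicator_mul_fiberIndicator_apply hij, ?_, ?_⟩ <;>
  refine lp.norm_le_of_forall_le hε.le fun m => ?_
  · rw [lp.coeFn_sub, Pi.sub_apply, hsum Prod.fst, ← dist_eq_norm]
    exact (hg' m).1.le
  · rw [lp.coeFn_sub, Pi.sub_apply, hsum Prod.snd, ← dist_eq_norm]
    exact (hg' m).2.le

section HomogeneousExtension

variable {E X : Type*} [NormedAddCommGroup E] [NormedSpace ℝ E] [NormedAddCommGroup X]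
  [NormedSpace ℝ X]

theorem inv_norm_smul_mem_sphere {x : E} (hx : x ≠ 0) : ‖x‖⁻¹ • x ∈ sphere (0 : E) 1 :=
  mem_sphere_zero_iff_norm.2 (norm_smul_inv_norm hx)

def IsHomogeneousExtension (Δ : sphere (0 : E) 1 → sphere (0 : X) 1) (F : E → X) : Prop :=
  F 0 = 0 ∧ ∀ x (hx : x ≠ 0), F x = ‖x‖ • (Δ ⟨‖x‖⁻¹ • x, inv_norm_smul_mem_sphere hx⟩ : X)

namespace IsHomogeneousExtension

variable {Δ : sphere (0 : E) 1 → sphere (0 : X) 1} {F : E → X}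

theorem apply_eq_smul (hF : IsHomogeneousExtension Δ F) {x : E} (hx : x ≠ 0)
    {u : sphere (0 : E) 1} (hu : (u : E) = ‖x‖⁻¹ • x) : F x = ‖x‖ • (Δ u : X) := by
  obtain rfl : u = ⟨_, inv_norm_smul_mem_sphere hx⟩ := Subtype.ext hu
  exact hF.2 x hx

theorem norm_apply (hF : IsHomogeneousExtension Δ F) (x : E) : ‖F x‖ = ‖x‖ := by
  rcases eq_or_ne x 0 with rfl | hx
  · rw [hF.1, norm_zero, norm_zero]
  · rw [hF.2 x hx, norm_smul, norm_norm, mem_sphere_zero_iff_norm.1 (Δ _).2, mul_one]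

theorem apply_of_mem_sphere (hF : IsHomogeneousExtension Δ F) {x : E}
    (hx : x ∈ sphere (0 : E) 1) : F x = Δ ⟨x, hx⟩ := by
  have hx1 : ‖x‖ = 1 := mem_sphere_zero_iff_norm.1 hx
  rw [hF.apply_eq_smul (ne_zero_of_mem_unit_sphere ⟨x, hx⟩) (u := ⟨x, hx⟩) (by simp [hx1]),
    hx1, one_smul]

theorem surjective (hF : IsHomogeneousExtension Δ F) (hΔ : Surjective Δ) : Surjective F := by
  intro y
  rcases eq_or_ne y 0 with rfl | hy
  · exact ⟨0, hF.1⟩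
  obtain ⟨u, hu⟩ := hΔ ⟨_, inv_norm_smul_mem_sphere hy⟩
  have hny : ‖y‖ ≠ 0 := norm_ne_zero_iff.2 hy
  have hnorm : ‖‖y‖ • (u : E)‖ = ‖y‖ := by
    rw [norm_smul, norm_norm, mem_sphere_zero_iff_norm.1 u.2, mul_one]
  have hne : ‖y‖ • (u : E) ≠ 0 := by rw [← norm_ne_zero_iff, hnorm]; exact hny
  refine ⟨‖y‖ • (u : E), ?_⟩
  rw [hF.apply_eq_smul hne (u := u) (by rw [hnorm, inv_smul_smul₀ hny]), hnorm, hu,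
    smul_inv_smul₀ hny]

theorem lipschitzWith (hF : IsHomogeneousExtension Δ F) (hΔ : Isometry Δ) :
    LipschitzWith 3 F := by
  refine LipschitzWith.of_dist_le_mul fun x y => ?_
  rw [dist_eq_norm, dist_eq_norm, NNReal.coe_ofNat]
  rcases eq_or_ne x 0 with rfl | hx
  · rw [hF.1, zero_sub, zero_sub, norm_neg, norm_neg, hF.norm_apply]
    linarith [norm_nonneg y]
  rcases eq_or_ne y 0 with rfl | hy
  · rw [hF.1, sub_zero, sub_zero, hF.norm_apply]
    linarith [norm_nonneg x]
  set u : sphere (0 : E) 1 := ⟨_, inv_norm_smul_mem_sphere hx⟩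
  set w : sphere (0 : E) 1 := ⟨_, inv_norm_smul_mem_sphere hy⟩
  have hΔw : ‖(Δ w : X)‖ = 1 := mem_sphere_zero_iff_norm.1 (Δ w).2
  calc ‖F x - F y‖ = ‖‖x‖ • ((Δ u : X) - Δ w) + (‖x‖ - ‖y‖) • (Δ w : X)‖ := by
        rw [hF.2 x hx, hF.2 y hy]
        congr 1
        module
    _ ≤ ‖x‖ * ‖(u : E) - w‖ + |‖x‖ - ‖y‖| := by
        refine (norm_add_le _ _).trans_eq ?_
        rw [norm_smul, norm_smul, norm_norm, hΔw, mul_one, Real.norm_eq_abs, ← dist_eq_norm,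
          ← dist_eq_norm, ← Subtype.dist_eq, ← Subtype.dist_eq, hΔ.dist_eq]
    _ ≤ 2 * ‖x - y‖ + ‖x - y‖ :=
        add_le_add (norm_mul_norm_inv_norm_smul_sub_le x hy) (abs_norm_sub_norm_le x y)
    _ = 3 * ‖x - y‖ := by ring

theorem norm_sub_apply (hF : IsHomogeneousExtension Δ F)
    (hadd : ∀ a b, F (a + b) = F a + F b) (a b : E) : ‖F a - F b‖ = ‖a - b‖ := by
  have hsplit : F a = F (a - b) + F b := by rw [← hadd, sub_add_cancel]
  rw [hsplit, add_sub_cancel_right, hF.norm_apply]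

end IsHomogeneousExtension

end HomogeneousExtension

theorem stmt16 {Γ : Type*} [Infinite Γ] {X : Type*} [NormedAddCommGroup X]
    [NormedSpace ℂ X]
    (Δ : Metric.sphere (0 : lp (fun _ : Γ => ℂ) ∞) 1 → Metric.sphere (0 : X) 1)
    (hsurj : Function.Surjective Δ)
    (hiso : ∀ u v, ‖(Δ u : X) - (Δ v : X)‖ =
      ‖(u : lp (fun _ : Γ => ℂ) ∞) - (v : lp (fun _ : Γ => ℂ) ∞)‖)
    (σ : Γ → ℂ → ℂ) (hσ : ∀ k, σ k = id ∨ σ k = (starRingEnd ℂ))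
    (odot : ℂ → lp (fun _ : Γ => ℂ) ∞ → lp (fun _ : Γ => ℂ) ∞)
    (hodot : ∀ α a m, odot α a m = σ m α * a m)
    (F : lp (fun _ : Γ => ℂ) ∞ → X) (hF0 : F 0 = 0)
    (hF : ∀ (x : lp (fun _ : Γ => ℂ) ∞) (hx : x ≠ 0),
      F x = ‖x‖ • (Δ ⟨‖x‖⁻¹ • x, by
        rw [mem_sphere_zero_iff_norm, norm_smul, norm_inv, norm_norm,
          inv_mul_cancel₀ (fun h => hx (norm_eq_zero.mp h))]⟩ : X))
    -- additivity on algebraic elements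
    (halg : ∀ (k : ℕ) (v : Fin (k + 1) → lp (fun _ : Γ => ℂ) ∞),
      (∀ j m, ‖v j m‖ = 0 ∨ ‖v j m‖ = 1) → (∀ j, v j ≠ 0) →
      (∀ i j, i ≠ j → ∀ m, v i m * v j m = 0) →
      ∀ α β : Fin (k + 1) → ℂ,
        F ((∑ j, odot (α j) (v j)) + ∑ j, odot (β j) (v j)) =
          F (∑ j, odot (α j) (v j)) + F (∑ j, odot (β j) (v j))) :
    (∀ a b, F (a + b) = F a + F b) ∧
    (∀ (r : ℝ) (a : lp (fun _ : Γ => ℂ) ∞), F (r • a) = r • F a) ∧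
    Function.Surjective F ∧
    (∀ a b, ‖F a - F b‖ = ‖a - b‖) ∧
    (∀ (x : lp (fun _ : Γ => ℂ) ∞)
        (hx : x ∈ Metric.sphere (0 : lp (fun _ : Γ => ℂ) ∞) 1),
      F x = (Δ ⟨x, hx⟩ : X)) := by
  have hFΔ : IsHomogeneousExtension Δ F := ⟨hF0, hF⟩
  have hΔ : Isometry Δ := Isometry.of_dist_eq fun u v => by
    rw [Subtype.dist_eq, Subtype.dist_eq, dist_eq_norm, dist_eq_norm, hiso]
  have hcont : Continuous F := (hFΔ.lipschitzWith hΔ).continuous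
  have hadd : ∀ a b, F (a + b) = F a + F b := by
    refine map_add_of_dense hcont (Metric.dense_iff.2 ?_)
    rintro ⟨a, b⟩ r hr
    obtain ⟨k, v, α, β, hv, hv0, horth, ha, hb⟩ :=
      exists_orthogonal_partialIsometry_approx hσ hodot a b (half_pos hr)
    refine ⟨(_, _), ?_, halg k v hv hv0 horth α β⟩
    rw [mem_ball, Prod.dist_eq, max_lt_iff, dist_eq_norm, dist_eq_norm, norm_sub_rev,
      norm_sub_rev _ b]
    exact ⟨ha.trans_lt (half_lt_self hr), hb.trans_lt (half_lt_self hr)⟩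
  exact ⟨hadd, map_real_smul (AddMonoidHom.mk' F hadd) hcont, hFΔ.surjective hsurj,
    hFΔ.norm_sub_apply hadd, fun _ => hFΔ.apply_of_mem_sphere⟩
end
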